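/- arXiv:2304.00047 — 2 statements merged into one kernel-verified Lean document; each statement's English description precedes it below -/
import Mathlib

section
/- Growing the family of encoders can strictly lower the privacy score: there exist a finite sample universe X with labeling function L : X → Y, a distribution for the random dataset 𝒳_A satisfying Assumption 1, two families of bijections F ⊊ F' of X, and random encoders T_A distributed uniformly on F and T'_A distributed uniformly on F' (each independent of 𝒳_A), such that H(T'_A | Obs(T'_A)) < H(T_A | Obs(T_A)). -/
open scoped Classical

noncomputable def Pr {Ω : Type*} [Fintype Ω] (w : Ω → ℝ) (A : Set Ω) : ℝ :=
  ∑ ω, if ω ∈ A then w ω else 0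

noncomputable def entropy {Ω α : Type*} [Fintype Ω] [Fintype α] (w : Ω → ℝ) (V : Ω → α) : ℝ :=
  -∑ a, Pr w {ω | V ω = a} * Real.logb 2 (Pr w {ω | V ω = a})

noncomputable def condEntropy {Ω α β : Type*} [Fintype Ω] [Fintype α] [Fintype β]
    (w : Ω → ℝ) (V : Ω → α) (W : Ω → β) : ℝ :=
  entropy w (fun ω => (V ω, W ω)) - entropy w W

/- Auxiliary definitions for the counterexample -/

/-- the transposition (0 1) on `Fin 3` -/
def s3 : Fin 3 → Fin 3 := ![1,0,2]
/-- the transposition (0 2) on `Fin 3` -/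
def t3 : Fin 3 → Fin 3 := ![2,1,0]
/-- the encoder uniform on `{id, s3}` -/
def TA6 : Fin 6 → Fin 3 → Fin 3 := ![id,id,id,s3,s3,s3]
/-- the encoder uniform on `{id, s3, t3}` -/
def TB6 : Fin 6 → Fin 3 → Fin 3 := ![id,id,s3,s3,t3,t3]
/-- the labeling function -/
def L3 : Fin 3 → Fin 2 := ![0,0,1]
/-- the observation produced by `id` and by `s3` -/
def O1 : Finset (Fin 3 × Fin 2) := {(0,0),(1,0),(2,1)}
/-- the observation produced by `t3` -/
def O2 : Finset (Fin 3 × Fin 2) := {(2,0),(1,0),(0,1)}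

lemma Pr_zero {Ω α : Type*} [Fintype Ω] (w : Ω → ℝ) (V : Ω → α) (a : α)
    (h : ∀ ω, V ω ≠ a) : Pr w {ω | V ω = a} = 0 := by
  unfold Pr
  apply Finset.sum_eq_zero
  intro ω _
  simp [h ω]

lemma entropy_restrict {Ω α : Type*} [Fintype Ω] [Fintype α] (w : Ω → ℝ) (V : Ω → α)
    (S : Finset α) (hmem : ∀ ω, V ω ∈ S) :
    entropy w V = -∑ a ∈ S, Pr w {ω | V ω = a} * Real.logb 2 (Pr w {ω | V ω = a}) := by
  unfold entropy
  congr 1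
  refine (Finset.sum_subset (Finset.subset_univ S) ?_).symm
  intro a _ ha
  rw [Pr_zero w V a (fun ω h => ha (h ▸ hmem ω))]
  simp

/-- Proposition 1 of the paper.  Growing the family of encoders can
strictly lower the privacy score: there exist a finite sample universe `X = Fin nX` with
labeling function `L : X → Y`, a finite probability space, a random dataset `𝒳_A`
satisfying Assumption 1, families of bijections `F ⊊ F'`, and encoders `T_A` uniform on
`F` and `T'_A` uniform on `F'` (each independent of `𝒳_A`), such that
`H(T'_A | Obs(T'_A)) < H(T_A | Obs(T_A))`. -/
theorem stmt4 :
    ∃ (nX nY nΩ : ℕ) (L : Fin nX → Fin nY) (w : Fin nΩ → ℝ)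
      (XA : Fin nΩ → Finset (Fin nX)) (F F' : Finset (Fin nX → Fin nX))
      (TA T'A : Fin nΩ → Fin nX → Fin nX),
      (∀ ω, 0 ≤ w ω) ∧ (∑ ω, w ω = 1) ∧
      -- `F'` (and hence `F`) is a family of bijections, and `F` is strictly contained in `F'`
      (∀ T ∈ F', Function.Bijective T) ∧
      F ⊂ F' ∧
      -- Assumption 1: the distribution of `𝒳_A` depends only on the cardinality
      (∀ S₁ S₂ : Finset (Fin nX), S₁.card = S₂.card →
        Pr w {ω | XA ω = S₁} = Pr w {ω | XA ω = S₂}) ∧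
      -- `T_A` is uniformly distributed on `F`
      (∀ T ∈ F, Pr w {ω | TA ω = T} = 1 / (F.card : ℝ)) ∧
      (∀ T ∉ F, Pr w {ω | TA ω = T} = 0) ∧
      -- `T'_A` is uniformly distributed on `F'`
      (∀ T ∈ F', Pr w {ω | T'A ω = T} = 1 / (F'.card : ℝ)) ∧
      (∀ T ∉ F', Pr w {ω | T'A ω = T} = 0) ∧
      -- both encoders are independent of `𝒳_A`
      (∀ (T : Fin nX → Fin nX) (S : Finset (Fin nX)),
        Pr w {ω | TA ω = T ∧ XA ω = S} = Pr w {ω | TA ω = T} * Pr w {ω | XA ω = S}) ∧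
      (∀ (T : Fin nX → Fin nX) (S : Finset (Fin nX)),
        Pr w {ω | T'A ω = T ∧ XA ω = S} = Pr w {ω | T'A ω = T} * Pr w {ω | XA ω = S}) ∧
      -- the privacy score of the larger family is strictly smaller
      condEntropy w T'A (fun ω => (XA ω).image (fun x => (T'A ω x, L x)))
        < condEntropy w TA (fun ω => (XA ω).image (fun x => (TA ω x, L x))) := by
  refine ⟨3, 2, 6, L3, (fun _ => 1/6), (fun _ => Finset.univ),
    {id, s3}, {id, s3, t3}, TA6, TB6, ?_, ?_, ?_, ?_, ?_, ?_, ?_, ?_, ?_, ?_, ?_, ?_⟩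
  · intro ω; norm_num
  · rw [Fin.sum_univ_six]; norm_num
  · intro T hT
    simp only [Finset.mem_insert, Finset.mem_singleton] at hT
    rcases hT with rfl | rfl | rfl <;> decide
  · decide
  · -- Assumption 1
    intro S₁ S₂ h
    by_cases h1 : S₁ = (Finset.univ : Finset (Fin 3))
    · have h2 : S₂ = (Finset.univ : Finset (Fin 3)) := by
        rw [← Finset.card_eq_iff_eq_univ, ← h, h1, Finset.card_univ]
      rw [h1, h2]
    · have h2 : S₂ ≠ (Finset.univ : Finset (Fin 3)) := by
        intro hh
        exact h1 (by rw [← Finset.card_eq_iff_eq_univ, h, hh, Finset.card_univ])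
      rw [Pr_zero _ _ S₁ (fun ω he => h1 he.symm),
          Pr_zero _ _ S₂ (fun ω he => h2 he.symm)]
  · -- TA uniform on F
    intro T hT
    simp only [Finset.mem_insert, Finset.mem_singleton] at hT
    rcases hT with rfl | rfl <;>
    · unfold Pr
      simp only [Set.mem_setOf_eq]
      rw [Fin.sum_univ_six]
      simp (config := { decide := true }) only []
      norm_num [show ({id, s3} : Finset (Fin 3 → Fin 3)).card = 2 from by decide]
  · intro T hT
    refine Pr_zero _ _ T (fun ω he => hT ?_)
    exact he ▸ (by decide : ∀ ω, TA6 ω ∈ ({id, s3} : Finset (Fin 3 → Fin 3))) ω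
  · -- T'A uniform on F'
    intro T hT
    simp only [Finset.mem_insert, Finset.mem_singleton] at hT
    rcases hT with rfl | rfl | rfl <;>
    · unfold Pr
      simp only [Set.mem_setOf_eq]
      rw [Fin.sum_univ_six]
      simp (config := { decide := true }) only []
      norm_num [show ({id, s3, t3} : Finset (Fin 3 → Fin 3)).card = 3 from by decide]
  · intro T hT
    refine Pr_zero _ _ T (fun ω he => hT ?_)
    exact he ▸ (by decide : ∀ ω, TB6 ω ∈ ({id, s3, t3} : Finset (Fin 3 → Fin 3))) ω
  · -- independence of TA and XA
    intro T S
    by_cases hS : S = (Finset.univ : Finset (Fin 3))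
    · subst hS
      have h1 : {ω : Fin 6 | TA6 ω = T ∧ (Finset.univ : Finset (Fin 3)) = Finset.univ}
          = {ω | TA6 ω = T} := by ext ω; simp
      have h2 : Pr (fun _ : Fin 6 => (1/6 : ℝ))
          {ω : Fin 6 | (Finset.univ : Finset (Fin 3)) = Finset.univ} = 1 := by
        unfold Pr
        simp only [Set.mem_setOf_eq]
        rw [Fin.sum_univ_six]
        norm_num
      rw [h1, h2, mul_one]
    · rw [Pr_zero _ _ S (fun ω he => hS he.symm), mul_zero]
      unfold Pr
      apply Finset.sum_eq_zero
      intro ω _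
      rw [if_neg]
      exact fun hc => hS hc.2.symm
  · -- independence of T'A and XA
    intro T S
    by_cases hS : S = (Finset.univ : Finset (Fin 3))
    · subst hS
      have h1 : {ω : Fin 6 | TB6 ω = T ∧ (Finset.univ : Finset (Fin 3)) = Finset.univ}
          = {ω | TB6 ω = T} := by ext ω; simp
      have h2 : Pr (fun _ : Fin 6 => (1/6 : ℝ))
          {ω : Fin 6 | (Finset.univ : Finset (Fin 3)) = Finset.univ} = 1 := by
        unfold Pr
        simp only [Set.mem_setOf_eq]
        rw [Fin.sum_univ_six]
        norm_num
      rw [h1, h2, mul_one]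
    · rw [Pr_zero _ _ S (fun ω he => hS he.symm), mul_zero]
      unfold Pr
      apply Finset.sum_eq_zero
      intro ω _
      rw [if_neg]
      exact fun hc => hS hc.2.symm
  · -- the entropy inequality
    set w : Fin 6 → ℝ := fun _ => 1/6 with hw
    have l13 : Real.logb 2 ((1:ℝ)/3) = -Real.logb 2 3 := by
      rw [one_div, Real.logb_inv]
    have l23 : Real.logb 2 ((2:ℝ)/3) = 1 - Real.logb 2 3 := by
      rw [Real.logb_div (by norm_num) (by norm_num), Real.logb_self_eq_one (by norm_num)]
    -- entropy of ObsT (constant O1)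
    have e1 : entropy w
        (fun ω => Finset.image (fun x => (TA6 ω x, L3 x)) Finset.univ) = 0 := by
      rw [entropy_restrict _ _ ({O1} : Finset (Finset (Fin 3 × Fin 2))) (by decide),
          Finset.sum_singleton]
      have p : Pr w {ω : Fin 6 | Finset.image (fun x => (TA6 ω x, L3 x)) Finset.univ = O1}
          = 1 := by
        unfold Pr
        simp only [Set.mem_setOf_eq]
        rw [Fin.sum_univ_six]
        simp (config := { decide := true }) only []
        norm_num
      rw [p, Real.logb_one]
      ring
    -- entropy of (TA, ObsT)
    have e2 : entropy w
        (fun ω => (TA6 ω, Finset.image (fun x => (TA6 ω x, L3 x)) Finset.univ)) = 1 := by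
      rw [entropy_restrict _ _
          ({((id : Fin 3 → Fin 3), O1), (s3, O1)} :
            Finset ((Fin 3 → Fin 3) × Finset (Fin 3 × Fin 2))) (by decide),
          Finset.sum_insert (by decide), Finset.sum_singleton]
      have p1 : Pr w {ω : Fin 6 |
          (TA6 ω, Finset.image (fun x => (TA6 ω x, L3 x)) Finset.univ)
            = ((id : Fin 3 → Fin 3), O1)} = 1/2 := by
        unfold Pr
        simp only [Set.mem_setOf_eq]
        rw [Fin.sum_univ_six]
        simp (config := { decide := true }) only []
        norm_num
      have p2 : Pr w {ω : Fin 6 |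
          (TA6 ω, Finset.image (fun x => (TA6 ω x, L3 x)) Finset.univ)
            = (s3, O1)} = 1/2 := by
        unfold Pr
        simp only [Set.mem_setOf_eq]
        rw [Fin.sum_univ_six]
        simp (config := { decide := true }) only []
        norm_num
      have hl : Real.logb 2 ((1:ℝ)/2) = -1 := by
        rw [one_div, Real.logb_inv, Real.logb_self_eq_one (by norm_num)]
      rw [p1, p2, hl]
      norm_num
    -- entropy of Obs' (values O1 w.p. 2/3 and O2 w.p. 1/3)
    have e3 : entropy w
        (fun ω => Finset.image (fun x => (TB6 ω x, L3 x)) Finset.univ)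
          = Real.logb 2 3 - 2/3 := by
      rw [entropy_restrict _ _ ({O1, O2} : Finset (Finset (Fin 3 × Fin 2))) (by decide),
          Finset.sum_insert (by decide), Finset.sum_singleton]
      have p1 : Pr w {ω : Fin 6 | Finset.image (fun x => (TB6 ω x, L3 x)) Finset.univ = O1}
          = 2/3 := by
        unfold Pr
        simp only [Set.mem_setOf_eq]
        rw [Fin.sum_univ_six]
        simp (config := { decide := true }) only []
        norm_num
      have p2 : Pr w {ω : Fin 6 | Finset.image (fun x => (TB6 ω x, L3 x)) Finset.univ = O2}
          = 1/3 := by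
        unfold Pr
        simp only [Set.mem_setOf_eq]
        rw [Fin.sum_univ_six]
        simp (config := { decide := true }) only []
        norm_num
      rw [p1, p2, l13, l23]
      ring
    -- entropy of (T'A, Obs')
    have e4 : entropy w
        (fun ω => (TB6 ω, Finset.image (fun x => (TB6 ω x, L3 x)) Finset.univ))
          = Real.logb 2 3 := by
      rw [entropy_restrict _ _
          ({((id : Fin 3 → Fin 3), O1), (s3, O1), (t3, O2)} :
            Finset ((Fin 3 → Fin 3) × Finset (Fin 3 × Fin 2))) (by decide),
          Finset.sum_insert (by decide), Finset.sum_insert (by decide),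
          Finset.sum_singleton]
      have p1 : Pr w {ω : Fin 6 |
          (TB6 ω, Finset.image (fun x => (TB6 ω x, L3 x)) Finset.univ)
            = ((id : Fin 3 → Fin 3), O1)} = 1/3 := by
        unfold Pr
        simp only [Set.mem_setOf_eq]
        rw [Fin.sum_univ_six]
        simp (config := { decide := true }) only []
        norm_num
      have p2 : Pr w {ω : Fin 6 |
          (TB6 ω, Finset.image (fun x => (TB6 ω x, L3 x)) Finset.univ)
            = (s3, O1)} = 1/3 := by
        unfold Pr
        simp only [Set.mem_setOf_eq]
        rw [Fin.sum_univ_six]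
        simp (config := { decide := true }) only []
        norm_num
      have p3 : Pr w {ω : Fin 6 |
          (TB6 ω, Finset.image (fun x => (TB6 ω x, L3 x)) Finset.univ)
            = (t3, O2)} = 1/3 := by
        unfold Pr
        simp only [Set.mem_setOf_eq]
        rw [Fin.sum_univ_six]
        simp (config := { decide := true }) only []
        norm_num
      rw [p1, p2, p3, l13]
      ring
    simp only [condEntropy]
    rw [e1, e2, e3, e4]
    norm_num
end

section
/- Given the outer encoder, a composed scheme is exactly as private as the inner scheme: let T_A be a random injective map X → Z independent of the random dataset 𝒳_A, and let T'_A be a random bijection of Z independent of the pair (T_A, 𝒳_A). Then H(T'_A ∘ T_A | Obs(T'_A ∘ T_A), T'_A) = H(T_A | Obs(T_A)), where on the left the conditional entropy is taken jointly on the composed observation and the value of T'_A. -/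
open scoped Classical

lemma Pr_nonneg {Ω : Type*} [Fintype Ω] {w : Ω → ℝ} (hw0 : ∀ ω, 0 ≤ w ω) (A : Set Ω) :
    0 ≤ Pr w A := by
  apply Finset.sum_nonneg
  intro ω _
  split <;> simp [hw0 ω]

lemma Pr_congr {Ω : Type*} [Fintype Ω] (w : Ω → ℝ) {A B : Set Ω}
    (h : ∀ ω, ω ∈ A ↔ ω ∈ B) : Pr w A = Pr w B := by
  have : A = B := Set.ext h
  rw [this]

lemma sum_Pr_fiber {Ω α : Type*} [Fintype Ω] [Fintype α] (w : Ω → ℝ) (V : Ω → α) :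
    ∑ a, Pr w {ω | V ω = a} = ∑ ω, w ω := by
  unfold Pr
  rw [Finset.sum_comm]
  refine Finset.sum_congr rfl fun ω _ => ?_
  simp only [Set.mem_setOf_eq]
  rw [Finset.sum_ite_eq Finset.univ (V ω) (fun _ => w ω)]
  simp

lemma entropy_comp {Ω α β : Type*} [Fintype Ω] [Fintype α] [Fintype β]
    (w : Ω → ℝ) (V : Ω → α) (V' : Ω → β) (g : α → β) (h : β → α)
    (hg : ∀ ω, g (V ω) = V' ω) (hh : ∀ ω, h (V' ω) = V ω) :
    entropy w V = entropy w V' := by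
  unfold entropy
  congr 1
  have hVzero : ∀ a : α, a ∉ Finset.univ.image V →
      Pr w {ω | V ω = a} * Real.logb 2 (Pr w {ω | V ω = a}) = 0 := by
    intro a ha
    have : Pr w {ω | V ω = a} = 0 := by
      apply Finset.sum_eq_zero
      intro ω _
      rw [if_neg]
      intro hmem
      exact ha (Finset.mem_image.2 ⟨ω, Finset.mem_univ ω, hmem⟩)
    rw [this, mul_comm, mul_zero]
  have hV'zero : ∀ b : β, b ∉ Finset.univ.image V' →
      Pr w {ω | V' ω = b} * Real.logb 2 (Pr w {ω | V' ω = b}) = 0 := by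
    intro b hb
    have : Pr w {ω | V' ω = b} = 0 := by
      apply Finset.sum_eq_zero
      intro ω _
      rw [if_neg]
      intro hmem
      exact hb (Finset.mem_image.2 ⟨ω, Finset.mem_univ ω, hmem⟩)
    rw [this, mul_comm, mul_zero]
  rw [← Finset.sum_subset (Finset.subset_univ (Finset.univ.image V)) (fun a _ ha => hVzero a ha),
      ← Finset.sum_subset (Finset.subset_univ (Finset.univ.image V')) (fun b _ hb => hV'zero b hb)]
  apply Finset.sum_nbij' (i := g) (j := h)
  · intro a ha
    obtain ⟨ω, _, rfl⟩ := Finset.mem_image.1 ha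
    exact Finset.mem_image.2 ⟨ω, Finset.mem_univ ω, (hg ω).symm⟩
  · intro b hb
    obtain ⟨ω, _, rfl⟩ := Finset.mem_image.1 hb
    exact Finset.mem_image.2 ⟨ω, Finset.mem_univ ω, (hh ω).symm⟩
  · intro a ha
    obtain ⟨ω, _, rfl⟩ := Finset.mem_image.1 ha
    rw [hg, hh]
  · intro b hb
    obtain ⟨ω, _, rfl⟩ := Finset.mem_image.1 hb
    rw [hh, hg]
  · intro a ha
    obtain ⟨ω0, _, rfl⟩ := Finset.mem_image.1 ha
    have hset : {ω | V ω = V ω0} = {ω | V' ω = g (V ω0)} := by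
      ext ω
      simp only [Set.mem_setOf_eq]
      constructor
      · intro hv; rw [← hg, hv]
      · intro hv
        have := congrArg h hv
        rw [hh, hg, hh] at this
        exact this
    rw [show Pr w {ω | V ω = V ω0} = Pr w {ω | V' ω = g (V ω0)} from by rw [hset]]

lemma entropy_pair_of_indep {Ω α β : Type*} [Fintype Ω] [Fintype α] [Fintype β]
    {w : Ω → ℝ} (hw0 : ∀ ω, 0 ≤ w ω) (hw1 : ∑ ω, w ω = 1)
    (A : Ω → α) (B : Ω → β)
    (hind : ∀ a b, Pr w {ω | A ω = a ∧ B ω = b}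
      = Pr w {ω | A ω = a} * Pr w {ω | B ω = b}) :
    entropy w (fun ω => (A ω, B ω)) = entropy w A + entropy w B := by
  unfold entropy
  rw [Fintype.sum_prod_type]
  have hterm : ∀ (a : α) (b : β),
      Pr w {ω | (A ω, B ω) = (a, b)} * Real.logb 2 (Pr w {ω | (A ω, B ω) = (a, b)})
      = Pr w {ω | B ω = b} * (Pr w {ω | A ω = a} * Real.logb 2 (Pr w {ω | A ω = a}))
        + Pr w {ω | A ω = a} * (Pr w {ω | B ω = b} * Real.logb 2 (Pr w {ω | B ω = b})) := by
    intro a b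
    have hset : Pr w {ω | (A ω, B ω) = (a, b)} = Pr w {ω | A ω = a ∧ B ω = b} := by
      apply Pr_congr
      intro ω
      simp [Prod.ext_iff]
    rw [hset, hind a b]
    set pa := Pr w {ω | A ω = a} with hpa
    set qb := Pr w {ω | B ω = b} with hqb
    rcases eq_or_lt_of_le (Pr_nonneg hw0 {ω | A ω = a}) with h1 | h1
    · rw [← hpa] at h1; rw [← h1]; ring
    rcases eq_or_lt_of_le (Pr_nonneg hw0 {ω | B ω = b}) with h2 | h2
    · rw [← hqb] at h2; rw [← h2]; ring
    rw [← hpa] at h1; rw [← hqb] at h2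
    rw [Real.logb_mul (ne_of_gt h1) (ne_of_gt h2)]
    ring
  have h1 : ∑ a, Pr w {ω | A ω = a} = 1 := by rw [sum_Pr_fiber, hw1]
  have h2 : ∑ b, Pr w {ω | B ω = b} = 1 := by rw [sum_Pr_fiber, hw1]
  have : ∑ a, ∑ b, Pr w {ω | (A ω, B ω) = (a, b)} *
        Real.logb 2 (Pr w {ω | (A ω, B ω) = (a, b)})
      = (∑ a, Pr w {ω | A ω = a} * Real.logb 2 (Pr w {ω | A ω = a}))
        + (∑ b, Pr w {ω | B ω = b} * Real.logb 2 (Pr w {ω | B ω = b})) := by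
    calc ∑ a, ∑ b, Pr w {ω | (A ω, B ω) = (a, b)} *
            Real.logb 2 (Pr w {ω | (A ω, B ω) = (a, b)})
        = ∑ a, ∑ b, (Pr w {ω | B ω = b} * (Pr w {ω | A ω = a} * Real.logb 2 (Pr w {ω | A ω = a}))
            + Pr w {ω | A ω = a} * (Pr w {ω | B ω = b} * Real.logb 2 (Pr w {ω | B ω = b}))) := by
          exact Finset.sum_congr rfl fun a _ => Finset.sum_congr rfl fun b _ => hterm a b
      _ = ∑ a, ((∑ b, Pr w {ω | B ω = b}) * (Pr w {ω | A ω = a} * Real.logb 2 (Pr w {ω | A ω = a}))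
            + Pr w {ω | A ω = a} * ∑ b, (Pr w {ω | B ω = b} * Real.logb 2 (Pr w {ω | B ω = b}))) := by
          refine Finset.sum_congr rfl fun a _ => ?_
          rw [Finset.sum_add_distrib, ← Finset.sum_mul, ← Finset.mul_sum]
      _ = _ := by
          rw [h2]
          rw [Finset.sum_add_distrib]
          simp only [one_mul]
          rw [← Finset.sum_mul, h1, one_mul]
  rw [this]
  ring

lemma Pr_fiber_decomp {Ω γ δ : Type*} [Fintype Ω] [Fintype γ] [DecidableEq γ]
    (w : Ω → ℝ) (V : Ω → γ) (F : γ → δ) (P : Ω → Prop) (c : δ) :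
    Pr w {ω | F (V ω) = c ∧ P ω}
      = ∑ g, if F g = c then Pr w {ω | V ω = g ∧ P ω} else 0 := by
  symm
  have h1 : ∀ g : γ, (if F g = c then Pr w {ω | V ω = g ∧ P ω} else 0)
      = ∑ ω, (if F g = c ∧ V ω = g ∧ P ω then w ω else 0) := by
    intro g
    unfold Pr
    by_cases h : F g = c
    · rw [if_pos h]
      refine Finset.sum_congr rfl fun ω _ => ?_
      simp [Set.mem_setOf_eq, h]
    · rw [if_neg h]
      exact (Finset.sum_eq_zero fun ω _ => by simp [h]).symm
  have h2 : ∀ ω : Ω, (∑ g, if F g = c ∧ V ω = g ∧ P ω then w ω else 0)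
      = (if F (V ω) = c ∧ P ω then w ω else 0) := by
    intro ω
    have hterm : ∀ g, (if F g = c ∧ V ω = g ∧ P ω then w ω else 0)
        = (if V ω = g then (if F (V ω) = c ∧ P ω then w ω else 0) else 0) := by
      intro g
      by_cases hv : V ω = g
      · subst hv
        by_cases hc : F (V ω) = c <;> by_cases hp : P ω <;> simp [hc, hp]
      · simp [hv, fun h : F g = c ∧ V ω = g ∧ P ω => hv h.2.1]
    rw [Finset.sum_congr rfl (fun g _ => hterm g), Finset.sum_ite_eq Finset.univ (V ω)]
    simp
  rw [Finset.sum_congr rfl (fun g _ => h1 g), Finset.sum_comm,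
    Finset.sum_congr rfl (fun ω _ => h2 ω)]
  unfold Pr
  refine Finset.sum_congr rfl fun ω _ => ?_
  simp [Set.mem_setOf_eq]

lemma indep_comp {Ω γ δ W' : Type*} [Fintype Ω] [Fintype γ] [DecidableEq γ]
    (w : Ω → ℝ) (V : Ω → γ) (T' : Ω → W')
    (hind : ∀ g t', Pr w {ω | V ω = g ∧ T' ω = t'}
      = Pr w {ω | V ω = g} * Pr w {ω | T' ω = t'})
    (F : γ → δ) (c : δ) (t' : W') :
    Pr w {ω | F (V ω) = c ∧ T' ω = t'}
      = Pr w {ω | F (V ω) = c} * Pr w {ω | T' ω = t'} := by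
  rw [Pr_fiber_decomp w V F (fun ω => T' ω = t') c]
  have h1 : Pr w {ω | F (V ω) = c} = ∑ g, if F g = c then Pr w {ω | V ω = g} else 0 := by
    have h2 := Pr_fiber_decomp w V F (fun _ => True) c
    simpa using h2
  rw [h1, Finset.sum_mul]
  refine Finset.sum_congr rfl fun g _ => ?_
  by_cases h : F g = c <;> simp [h, hind g t']


/-- Given the outer encoder, a composed scheme is exactly as private as
the inner scheme: if `T_A` is a random injective map `X → Z` independent of `𝒳_A`, and
`T'_A` is a random bijection of `Z` independent of the pair `(T_A, 𝒳_A)`, then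
`H(T'_A ∘ T_A | Obs(T'_A ∘ T_A), T'_A) = H(T_A | Obs(T_A))`. -/
theorem stmt6
    {Ω X Z Y : Type*} [Fintype Ω] [Fintype X] [Fintype Z] [Fintype Y]
    [DecidableEq X] [DecidableEq Z] [DecidableEq Y]
    (w : Ω → ℝ) (hw0 : ∀ ω, 0 ≤ w ω) (hw1 : ∑ ω, w ω = 1)
    (L : X → Y) (XA : Ω → Finset X) (TA : Ω → X → Z) (T'A : Ω → Z → Z)
    (hinj : ∀ ω, Function.Injective (TA ω))
    (hbij' : ∀ ω, Function.Bijective (T'A ω))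
    -- `T_A` is independent of `𝒳_A`
    (hindep1 : ∀ (T : X → Z) (S : Finset X),
      Pr w {ω | TA ω = T ∧ XA ω = S} = Pr w {ω | TA ω = T} * Pr w {ω | XA ω = S})
    -- `T'_A` is independent of the pair `(T_A, 𝒳_A)`
    (hindep2 : ∀ (T' : Z → Z) (T : X → Z) (S : Finset X),
      Pr w {ω | T'A ω = T' ∧ TA ω = T ∧ XA ω = S}
        = Pr w {ω | T'A ω = T'} * Pr w {ω | TA ω = T ∧ XA ω = S}) :
    condEntropy w (fun ω => T'A ω ∘ TA ω)
        (fun ω => ((XA ω).image (fun x => (T'A ω (TA ω x), L x)), T'A ω))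
      = condEntropy w TA (fun ω => (XA ω).image (fun x => (TA ω x, L x))) := by
  classical
  rcases isEmpty_or_nonempty Z with hZ | hZ
  · -- `Z` is empty, hence `X` is empty and everything is degenerate
    rcases isEmpty_or_nonempty Ω with hΩ | hΩ
    · rw [Finset.univ_eq_empty, Finset.sum_empty] at hw1
      exact absurd hw1 (by norm_num)
    have hX : IsEmpty X := ⟨fun x => hZ.false (TA (Classical.arbitrary Ω) x)⟩
    have huniq : ∀ (f g : X → Z), f = g := fun f g => funext fun x => hX.elim x
    have l1 : entropy w (fun ω => (T'A ω ∘ TA ω,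
          ((XA ω).image (fun x => (T'A ω (TA ω x), L x)), T'A ω)))
        = entropy w (fun ω => ((XA ω).image (fun x => (T'A ω (TA ω x), L x)), T'A ω)) :=
      entropy_comp w _ _ Prod.snd
        (fun b => (fun x => hX.elim x, b)) (fun ω => rfl)
        (fun ω => Prod.ext (huniq _ _) rfl)
    have l2 : entropy w (fun ω => (TA ω, (XA ω).image (fun x => (TA ω x, L x))))
        = entropy w (fun ω => (XA ω).image (fun x => (TA ω x, L x))) :=
      entropy_comp w _ _ Prod.snd
        (fun b => (fun x => hX.elim x, b)) (fun ω => rfl)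
        (fun ω => Prod.ext (huniq _ _) rfl)
    unfold condEntropy
    rw [l1, l2, sub_self, sub_self]
  set obs : Ω → Finset (Z × Y) := fun ω => (XA ω).image (fun x => (TA ω x, L x)) with hobs
  set obs' : Ω → Finset (Z × Y) := fun ω => (XA ω).image (fun x => (T'A ω (TA ω x), L x))
    with hobs'
  set V : Ω → (X → Z) × Finset X := fun ω => (TA ω, XA ω) with hV
  -- base independence in the convenient form
  have hbase : ∀ (g : (X → Z) × Finset X) (t' : Z → Z),
      Pr w {ω | V ω = g ∧ T'A ω = t'}
        = Pr w {ω | V ω = g} * Pr w {ω | T'A ω = t'} := by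
    intro g t'
    have e1 : Pr w {ω | V ω = g ∧ T'A ω = t'}
        = Pr w {ω | T'A ω = t' ∧ TA ω = g.1 ∧ XA ω = g.2} := by
      apply Pr_congr
      intro ω
      simp only [Set.mem_setOf_eq, hV, Prod.ext_iff]
      tauto
    have e2 : Pr w {ω | V ω = g} = Pr w {ω | TA ω = g.1 ∧ XA ω = g.2} := by
      apply Pr_congr
      intro ω
      simp only [Set.mem_setOf_eq, hV, Prod.ext_iff]
    rw [e1, e2, hindep2 t' g.1 g.2, mul_comm]
  -- independence of (TA, obs) and T'A
  have hind_pair : ∀ (c : (X → Z) × Finset (Z × Y)) (t' : Z → Z),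
      Pr w {ω | (TA ω, obs ω) = c ∧ T'A ω = t'}
        = Pr w {ω | (TA ω, obs ω) = c} * Pr w {ω | T'A ω = t'} := fun c t' =>
    indep_comp w V T'A hbase
      (fun p => (p.1, p.2.image (fun x => (p.1 x, L x)))) c t'
  -- independence of obs and T'A
  have hind_obs : ∀ (c : Finset (Z × Y)) (t' : Z → Z),
      Pr w {ω | obs ω = c ∧ T'A ω = t'}
        = Pr w {ω | obs ω = c} * Pr w {ω | T'A ω = t'} := fun c t' =>
    indep_comp w V T'A hbase (fun p => p.2.image (fun x => (p.1 x, L x))) c t'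
  have hinv : ∀ ω z, Function.invFun (T'A ω) (T'A ω z) = z := fun ω z =>
    Function.leftInverse_invFun (hbij' ω).injective z
  -- Step 1: relabel the joint variable
  have eq1 : entropy w (fun ω => (T'A ω ∘ TA ω, (obs' ω, T'A ω)))
      = entropy w (fun ω => ((TA ω, obs ω), T'A ω)) := by
    apply entropy_comp w _ _
      (fun q : (X → Z) × Finset (Z × Y) × (Z → Z) =>
        ((Function.invFun q.2.2 ∘ q.1, q.2.1.image (fun p => (Function.invFun q.2.2 p.1, p.2))),
          q.2.2))
      (fun r : ((X → Z) × Finset (Z × Y)) × (Z → Z) =>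
        (r.2 ∘ r.1.1, (r.1.2.image (fun p => (r.2 p.1, p.2)), r.2)))
    · intro ω
      refine Prod.ext (Prod.ext ?_ ?_) rfl
      · funext x
        exact hinv ω (TA ω x)
      · show (obs' ω).image (fun p => (Function.invFun (T'A ω) p.1, p.2)) = obs ω
        rw [hobs', Finset.image_image, hobs]
        refine Finset.image_congr fun x _ => ?_
        simp [Function.comp, hinv ω (TA ω x)]
    · intro ω
      refine Prod.ext rfl (Prod.ext ?_ rfl)
      · show (obs ω).image (fun p => (T'A ω p.1, p.2)) = obs' ω
        rw [hobs, Finset.image_image, hobs']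
        exact Finset.image_congr fun x _ => rfl
  -- Step 2: relabel the conditioning variable
  have eq3 : entropy w (fun ω => (obs' ω, T'A ω))
      = entropy w (fun ω => (obs ω, T'A ω)) := by
    apply entropy_comp w _ _
      (fun q : Finset (Z × Y) × (Z → Z) =>
        (q.1.image (fun p => (Function.invFun q.2 p.1, p.2)), q.2))
      (fun r : Finset (Z × Y) × (Z → Z) =>
        (r.1.image (fun p => (r.2 p.1, p.2)), r.2))
    · intro ω
      refine Prod.ext ?_ rfl
      show (obs' ω).image (fun p => (Function.invFun (T'A ω) p.1, p.2)) = obs ω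
      rw [hobs', Finset.image_image, hobs]
      refine Finset.image_congr fun x _ => ?_
      simp [Function.comp, hinv ω (TA ω x)]
    · intro ω
      refine Prod.ext ?_ rfl
      show (obs ω).image (fun p => (T'A ω p.1, p.2)) = obs' ω
      rw [hobs, Finset.image_image, hobs']
      exact Finset.image_congr fun x _ => rfl
  -- Step 3: additivity from independence
  have eq2 : entropy w (fun ω => ((TA ω, obs ω), T'A ω))
      = entropy w (fun ω => (TA ω, obs ω)) + entropy w T'A :=
    entropy_pair_of_indep hw0 hw1 _ _ hind_pair
  have eq4 : entropy w (fun ω => (obs ω, T'A ω))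
      = entropy w obs + entropy w T'A :=
    entropy_pair_of_indep hw0 hw1 _ _ hind_obs
  unfold condEntropy
  rw [eq1, eq2, eq3, eq4]
  ring
end
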